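/- arXiv:1406.3317 — 2 statements merged into one kernel-verified Lean document; each statement's English description precedes it below -/
import Mathlib

section
/- Let m, n be positive even integers, M a perfect matching of T_{m,n}, and D = D_{m,n}(M) the associated digraph. If two black vertices lie on a common directed path of D, then either both lie in an even row and an even column, or both lie in an odd row and an odd column. -/
/-- Vertex set of the toroidal grid: `ZMod m × ZMod n`. -/
abbrev TorV (m n : ℕ) := ZMod m × ZMod n

/-- Adjacency in the toroidal grid `T_{m,n}`: equal in one coordinate,
differing by exactly 1 (mod `m` or `n`) in the other. -/
def torAdj (m n : ℕ) (a b : TorV m n) : Prop :=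
  (a.1 = b.1 ∧ (a.2 = b.2 + 1 ∨ b.2 = a.2 + 1)) ∨
  (a.2 = b.2 ∧ (a.1 = b.1 + 1 ∨ b.1 = a.1 + 1))

/-- `M` is a perfect matching of `T_{m,n}`: every element is an edge of the grid,
and every vertex belongs to exactly one element of `M`. -/
def IsPM (m n : ℕ) (M : Finset (Sym2 (TorV m n))) : Prop :=
  (∀ e ∈ M, ∀ a b : TorV m n, e = s(a, b) → torAdj m n a b) ∧
  ∀ v : TorV m n, ∃! e, e ∈ M ∧ v ∈ e

/-- A vertex `(i,j)` is black when `i + j` is even. -/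
def IsBlack {m n : ℕ} (v : TorV m n) : Prop := Even (v.1.val + v.2.val)

/-- `u`, `v`, `w` lie in a common row or a common column. -/
def Collin {m n : ℕ} (u v w : TorV m n) : Prop :=
  (u.1 = v.1 ∧ v.1 = w.1) ∨ (u.2 = v.2 ∧ v.2 = w.2)

/-- The arc relation of the digraph `D_{m,n}(M)`: a black vertex points along its
matching edge; a white vertex `v` with matching edge `uv` points to the neighbor `w`
with `u,v,w` collinear and `vw ∉ M`. -/
def dArc (m n : ℕ) (M : Finset (Sym2 (TorV m n))) (v w : TorV m n) : Prop :=
  (IsBlack v ∧ torAdj m n v w ∧ s(v, w) ∈ M) ∨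
  (¬ IsBlack v ∧ torAdj m n v w ∧ s(v, w) ∉ M ∧ ∃ u, s(u, v) ∈ M ∧ Collin u v w)

/-- A directed cycle of `D_{m,n}(M)`, given by a `k`-periodic sequence of distinct
vertices following arcs of the digraph. -/
def IsDiCycle (m n : ℕ) (M : Finset (Sym2 (TorV m n))) (k : ℕ) (f : ℕ → TorV m n) : Prop :=
  0 < k ∧ (∀ i < k, ∀ j < k, f i = f j → i = j) ∧
  (∀ i, f (i + k) = f i) ∧ ∀ i, dArc m n M (f i) (f (i + 1))

/-- The underlying undirected edge set `U(C)` of a directed cycle. -/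
def cycEdges {m n : ℕ} (k : ℕ) (f : ℕ → TorV m n) : Finset (Sym2 (TorV m n)) :=
  (Finset.range k).image (fun i => s(f i, f (i + 1)))

/-- The vertex set of a directed cycle. -/
def cycVerts {m n : ℕ} (k : ℕ) (f : ℕ → TorV m n) : Finset (TorV m n) :=
  (Finset.range k).image f

/-- The layer `A` of wrap-around vertical edges, between rows `m-1` and `0`. -/
def layerA (m n : ℕ) [NeZero n] : Finset (Sym2 (TorV m n)) :=
  Finset.univ.image (fun j : ZMod n => s(((0 : ZMod m), j), ((-1 : ZMod m), j)))

/-- The layer `B` of wrap-around horizontal edges, between columns `n-1` and `0`. -/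
def layerB (m n : ℕ) [NeZero m] : Finset (Sym2 (TorV m n)) :=
  Finset.univ.image (fun i : ZMod m => s((i, (0 : ZMod n)), (i, (-1 : ZMod n))))

/-- The horizontal edges of row `i`. -/
def rowEdges (m n : ℕ) [NeZero n] (i : ZMod m) : Finset (Sym2 (TorV m n)) :=
  Finset.univ.image (fun j : ZMod n => s((i, j), (i, j + 1)))

/-- The vertical edges of column `j`. -/
def colEdges (m n : ℕ) [NeZero m] (j : ZMod n) : Finset (Sym2 (TorV m n)) :=
  Finset.univ.image (fun i : ZMod m => s((i, j), (i + 1, j)))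

section Aux

lemma even_two_le' {n : ℕ} [NeZero n] (hn : Even n) : 2 ≤ n := by
  rcases hn with ⟨k, rfl⟩
  have := NeZero.ne (k + k)
  omega

lemma val_add_one_mod_two' {n : ℕ} [NeZero n] (hn : Even n) (x : ZMod n) :
    (x + 1).val % 2 = (x.val + 1) % 2 := by
  have h2 : 2 ≤ n := even_two_le' hn
  haveI : Fact (1 < n) := ⟨h2⟩
  have hd : 2 ∣ n := hn.two_dvd
  rw [ZMod.val_add, ZMod.val_one, Nat.mod_mod_of_dvd _ hd]

lemma one_ne_zero'' {n : ℕ} [NeZero n] (hn : Even n) : (1 : ZMod n) ≠ 0 := by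
  haveI : Fact (1 < n) := ⟨even_two_le' hn⟩
  exact one_ne_zero

lemma step1d' {k : ℕ} [NeZero k] (hk : Even k) (a b c : ZMod k)
    (h1 : a = b + 1 ∨ b = a + 1) (h2 : b = c + 1 ∨ c = b + 1) (hne : c ≠ a) :
    c.val % 2 = a.val % 2 := by
  have key : ∀ x : ZMod k, (x + 1 + 1).val % 2 = x.val % 2 := by
    intro x
    have a1 := val_add_one_mod_two' hk x
    have a2 := val_add_one_mod_two' hk (x + 1)
    omega
  rcases h1 with h1 | h1 <;> rcases h2 with h2 | h2
  · have : a = c + 1 + 1 := by rw [h1, h2]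
    rw [this, key]
  · exact absurd (h2.trans h1.symm) hne
  · exact absurd (add_left_injective 1 (h1.symm.trans h2)).symm hne
  · have : c = a + 1 + 1 := by rw [h2, h1]
    rw [this, key]

lemma adj_flip' {m n : ℕ} [NeZero m] [NeZero n] (hm : Even m) (hn : Even n)
    {v w : TorV m n} (h : torAdj m n v w) :
    (w.1.val + w.2.val) % 2 = (v.1.val + v.2.val + 1) % 2 := by
  rcases h with ⟨h1, h2 | h2⟩ | ⟨h1, h2 | h2⟩
  · have hh := val_add_one_mod_two' hn w.2
    rw [← h2] at hh
    rw [h1]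
    omega
  · have hh := val_add_one_mod_two' hn v.2
    rw [← h2] at hh
    rw [h1]
    omega
  · have hh := val_add_one_mod_two' hm w.1
    rw [← h2] at hh
    rw [h1]
    omega
  · have hh := val_add_one_mod_two' hm v.1
    rw [← h2] at hh
    rw [h1]
    omega

lemma torAdj_irrefl' {m n : ℕ} [NeZero m] [NeZero n] (hm : Even m) (hn : Even n)
    (v : TorV m n) : ¬ torAdj m n v v := by
  rintro (⟨_, h | h⟩ | ⟨_, h | h⟩)
  · exact one_ne_zero'' hn (left_eq_add.mp h)
  · exact one_ne_zero'' hn (left_eq_add.mp h)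
  · exact one_ne_zero'' hm (left_eq_add.mp h)
  · exact one_ne_zero'' hm (left_eq_add.mp h)

lemma black_step' {m n : ℕ} [NeZero m] [NeZero n] (hm : Even m) (hn : Even n)
    (M : Finset (Sym2 (TorV m n))) (hM : IsPM m n M)
    {v w x : TorV m n} (hv : IsBlack v)
    (h1 : dArc m n M v w) (h2 : dArc m n M w x) :
    IsBlack x ∧ x.1.val % 2 = v.1.val % 2 := by
  rcases h1 with ⟨_, hadj1, hmem1⟩ | ⟨hnb, _⟩
  · have hflip := adj_flip' hm hn hadj1
    have hw : ¬ IsBlack w := by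
      unfold IsBlack at hv ⊢
      rw [Nat.even_iff] at hv ⊢
      omega
    rcases h2 with ⟨hb, _⟩ | ⟨_, hadj2, hnm2, u, humem, hcol⟩
    · exact absurd hb hw
    · have huv : u = v := by
        obtain ⟨e, _, hun⟩ := hM.2 w
        have e1 : s(v, w) = e := hun _ ⟨hmem1, Sym2.mem_mk_right v w⟩
        have e2 : s(u, w) = e := hun _ ⟨humem, Sym2.mem_mk_right u w⟩
        have heq : s(u, w) = s(v, w) := e2.trans e1.symm
        rw [Sym2.eq_iff] at heq
        rcases heq with ⟨h3, _⟩ | ⟨h3, h4⟩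
        · exact h3
        · exfalso
          rw [h3] at humem
          exact torAdj_irrefl' hm hn w (hM.1 _ humem w w rfl)
      rw [huv] at hcol
      have hxv : x ≠ v := by
        rintro rfl
        exact hnm2 (by rw [Sym2.eq_swap]; exact hmem1)
      rcases hcol with ⟨c1, c2⟩ | ⟨c1, c2⟩
      · -- same row
        have hr1 : v.2 = w.2 + 1 ∨ w.2 = v.2 + 1 := by
          rcases hadj1 with ⟨_, h⟩ | ⟨_, h⟩
          · exact h
          · exfalso
            rcases h with h | h
            · exact one_ne_zero'' hm (left_eq_add.mp (c1.symm.trans h))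
            · exact one_ne_zero'' hm (left_eq_add.mp (c1.trans h))
        have hr2 : w.2 = x.2 + 1 ∨ x.2 = w.2 + 1 := by
          rcases hadj2 with ⟨_, h⟩ | ⟨_, h⟩
          · exact h
          · exfalso
            rcases h with h | h
            · exact one_ne_zero'' hm (left_eq_add.mp (c2.symm.trans h))
            · exact one_ne_zero'' hm (left_eq_add.mp (c2.trans h))
        have hx2 : x.2 ≠ v.2 := by
          intro hc
          exact hxv (Prod.ext (c2.symm.trans c1.symm) hc)
        have hpar := step1d' hn v.2 w.2 x.2 hr1 hr2 hx2
        have hrow : x.1 = v.1 := c2.symm.trans c1.symm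
        constructor
        · unfold IsBlack at hv ⊢
          rw [Nat.even_iff] at hv ⊢
          rw [hrow]
          omega
        · rw [hrow]
      · -- same column
        have hr1 : v.1 = w.1 + 1 ∨ w.1 = v.1 + 1 := by
          rcases hadj1 with ⟨_, h⟩ | ⟨_, h⟩
          · exfalso
            rcases h with h | h
            · exact one_ne_zero'' hn (left_eq_add.mp (c1.symm.trans h))
            · exact one_ne_zero'' hn (left_eq_add.mp (c1.trans h))
          · exact h
        have hr2 : w.1 = x.1 + 1 ∨ x.1 = w.1 + 1 := by
          rcases hadj2 with ⟨_, h⟩ | ⟨_, h⟩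
          · exfalso
            rcases h with h | h
            · exact one_ne_zero'' hn (left_eq_add.mp (c2.symm.trans h))
            · exact one_ne_zero'' hn (left_eq_add.mp (c2.trans h))
          · exact h
        have hx1 : x.1 ≠ v.1 := by
          intro hc
          exact hxv (Prod.ext hc (c2.symm.trans c1.symm))
        have hpar := step1d' hm v.1 w.1 x.1 hr1 hr2 hx1
        have hcolv : x.2 = v.2 := c2.symm.trans c1.symm
        constructor
        · unfold IsBlack at hv ⊢
          rw [Nat.even_iff] at hv ⊢
          rw [hcolv]
          omega
        · exact hpar
  · exact absurd hv hnb

lemma black_parity_ind {m n : ℕ} [NeZero m] [NeZero n] (hm : Even m) (hn : Even n)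
    (M : Finset (Sym2 (TorV m n))) (hM : IsPM m n M)
    (L : ℕ) (g : ℕ → TorV m n) (hpath : ∀ i < L, dArc m n M (g i) (g (i + 1))) :
    ∀ d i, i + d ≤ L → IsBlack (g i) → IsBlack (g (i + d)) →
      (g (i + d)).1.val % 2 = (g i).1.val % 2 := by
  intro d
  induction d using Nat.strong_induction_on with
  | _ d ih =>
    intro i hle hbi hbd
    match d with
    | 0 => rfl
    | 1 =>
      exfalso
      have h1 := hpath i (by omega)
      rcases h1 with ⟨_, hadj, _⟩ | ⟨hnb, _⟩
      · have hflip := adj_flip' hm hn hadj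
        unfold IsBlack at hbi hbd
        rw [Nat.even_iff] at hbi hbd
        omega
      · exact hnb hbi
    | (d + 2) =>
      have h1 := hpath i (by omega)
      have h2 := hpath (i + 1) (by omega)
      obtain ⟨hb2, hpar⟩ := black_step' hm hn M hM hbi h1 h2
      have hidx : i + 1 + 1 = i + 2 := by omega
      rw [hidx] at hb2 hpar
      have hidx2 : i + (d + 2) = i + 2 + d := by omega
      rw [hidx2] at hbd ⊢
      have := ih d (by omega) (i + 2) (by omega) hb2 hbd
      omega

end Aux

/-- if two black vertices lie on a common directed path of
`D_{m,n}(M)`, then either both lie in an even row and an even column, or both lie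
in an odd row and an odd column. -/
theorem black_on_dipath_same_parity (m n : ℕ) [NeZero m] [NeZero n]
    (hm : Even m) (hn : Even n)
    (M : Finset (Sym2 (TorV m n))) (hM : IsPM m n M)
    (L : ℕ) (g : ℕ → TorV m n) (hpath : ∀ i < L, dArc m n M (g i) (g (i + 1)))
    (a b : ℕ) (ha : a ≤ L) (hb : b ≤ L)
    (hab : IsBlack (g a)) (hbb : IsBlack (g b)) :
    (Even (g a).1.val ∧ Even (g a).2.val ∧ Even (g b).1.val ∧ Even (g b).2.val) ∨
    (Odd (g a).1.val ∧ Odd (g a).2.val ∧ Odd (g b).1.val ∧ Odd (g b).2.val) := by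
  have key : ∀ p q : ℕ, p ≤ q → q ≤ L → IsBlack (g p) → IsBlack (g q) →
      (g q).1.val % 2 = (g p).1.val % 2 := by
    intro p q hpq hq hbp hbq
    have := black_parity_ind hm hn M hM L g hpath (q - p) p (by omega) hbp
      (by rw [show p + (q - p) = q by omega]; exact hbq)
    rwa [show p + (q - p) = q by omega] at this
  have hrel : (g b).1.val % 2 = (g a).1.val % 2 := by
    rcases le_total a b with h | h
    · exact key a b h hb hab hbb
    · exact (key b a h ha hbb hab).symm
  unfold IsBlack at hab hbb
  rw [Nat.even_iff] at hab hbb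
  simp only [Nat.even_iff, Nat.odd_iff]
  omega
end

section
/- Let m, n be positive even integers. Define Φ(M) = M △ U(C_M) where C_M is the first directed cycle of D_{m,n}(M) under a fixed total order on cycles that depends only on the vertex set of the cycle (orientation-independent). Then Φ is an involution on the set of perfect matchings of T_{m,n}. -/
open scoped symmDiff

/-- The vertex sets of the directed cycles of `D_{m,n}(M)`. -/
def cycleVertSets (m n : ℕ) (M : Finset (Sym2 (TorV m n))) : Set (Finset (TorV m n)) :=
  {S | ∃ k f, IsDiCycle m n M k f ∧ cycVerts k f = S}
namespace PhiAux

lemma one_lt_of_even_nezero {p : ℕ} [NeZero p] (hp : Even p) : 1 < p := by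
  rcases hp with ⟨r, rfl⟩
  have := NeZero.ne (r + r)
  omega

lemma zmod_one_ne_zero {p : ℕ} (hp : 1 < p) : (1 : ZMod p) ≠ 0 := by
  haveI : Fact (1 < p) := ⟨hp⟩
  exact one_ne_zero

variable {m n : ℕ}

lemma torAdj_symm {a b : TorV m n} (h : torAdj m n a b) : torAdj m n b a := by
  unfold torAdj at *
  tauto

lemma torAdj_irrefl (hm1 : 1 < m) (hn1 : 1 < n) {a : TorV m n} (h : torAdj m n a a) : False := by
  rcases h with ⟨_, h | h⟩ | ⟨_, h | h⟩
  · exact zmod_one_ne_zero hn1 (by rwa [left_eq_add] at h)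
  · exact zmod_one_ne_zero hn1 (by rwa [left_eq_add] at h)
  · exact zmod_one_ne_zero hm1 (by rwa [left_eq_add] at h)
  · exact zmod_one_ne_zero hm1 (by rwa [left_eq_add] at h)

lemma torAdj_ne (hm1 : 1 < m) (hn1 : 1 < n) {a b : TorV m n} (h : torAdj m n a b) : a ≠ b := by
  rintro rfl
  exact torAdj_irrefl hm1 hn1 h

lemma valFlip {p : ℕ} [NeZero p] (hp : Even p) (x : ZMod p) :
    (x + 1).val % 2 = (x.val + 1) % 2 := by
  haveI : Fact (1 < p) := ⟨one_lt_of_even_nezero hp⟩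
  rw [ZMod.val_add, ZMod.val_one]
  exact Nat.mod_mod_of_dvd _ hp.two_dvd

lemma blackFlip [NeZero m] [NeZero n] (hm : Even m) (hn : Even n) {a b : TorV m n}
    (h : torAdj m n a b) : (IsBlack a ↔ ¬ IsBlack b) := by
  rcases h with ⟨h1, h2 | h2⟩ | ⟨h1, h2 | h2⟩
  · have e1 : a.1.val = b.1.val := by rw [h1]
    have e2 : a.2.val % 2 = (b.2.val + 1) % 2 := by rw [h2]; exact valFlip hn b.2
    simp only [IsBlack, Nat.even_iff]; omega
  · have e1 : a.1.val = b.1.val := by rw [h1]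
    have e2 : b.2.val % 2 = (a.2.val + 1) % 2 := by rw [h2]; exact valFlip hn a.2
    simp only [IsBlack, Nat.even_iff]; omega
  · have e1 : a.2.val = b.2.val := by rw [h1]
    have e2 : a.1.val % 2 = (b.1.val + 1) % 2 := by rw [h2]; exact valFlip hm b.1
    simp only [IsBlack, Nat.even_iff]; omega
  · have e1 : a.2.val = b.2.val := by rw [h1]
    have e2 : b.1.val % 2 = (a.1.val + 1) % 2 := by rw [h2]; exact valFlip hm a.1
    simp only [IsBlack, Nat.even_iff]; omega

end PhiAux
namespace PhiAux
variable {m n : ℕ}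

section Per
variable {α : Type*} {k : ℕ} {f : ℕ → α}

lemma per_mul (hp : ∀ i, f (i + k) = f i) : ∀ q r, f (r + k * q) = f r := by
  intro q
  induction q with
  | zero => simp
  | succ q ih =>
    intro r
    have : r + k * (q + 1) = (r + k * q) + k := by ring
    rw [this, hp, ih]

lemma per_mod (hp : ∀ i, f (i + k) = f i) (a : ℕ) : f a = f (a % k) := by
  conv_lhs => rw [← Nat.mod_add_div a k]
  exact per_mul hp _ _

lemma fPer (hp : ∀ i, f (i + k) = f i) {a b : ℕ} (h : a % k = b % k) : f a = f b := by
  rw [per_mod hp a, per_mod hp b, h]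

end Per

lemma succ_mod {a k : ℕ} (hk : 1 < k) : (a + 1) % k = (a % k + 1) % k := by
  conv_lhs => rw [Nat.add_mod]
  rw [Nat.mod_eq_of_lt hk]

lemma edge_mem_cycEdges {k : ℕ} {f : ℕ → TorV m n} (hk : 1 < k)
    (hp : ∀ i, f (i + k) = f i) (j : ℕ) : s(f j, f (j + 1)) ∈ cycEdges k f := by
  refine Finset.mem_image.mpr ⟨j % k, Finset.mem_range.mpr (Nat.mod_lt _ (by omega)), ?_⟩
  have h1 : f (j % k) = f j := (per_mod hp j).symm
  have h2 : f (j % k + 1) = f (j + 1) := by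
    refine fPer hp ?_
    rw [succ_mod hk (a := j)]
  rw [h1, h2]

end PhiAux
namespace PhiAux
variable {m n : ℕ}

lemma vert_mem_cycVerts {k : ℕ} {f : ℕ → TorV m n} (hk : 0 < k)
    (hp : ∀ i, f (i + k) = f i) (j : ℕ) : f j ∈ cycVerts k f :=
  Finset.mem_image.mpr ⟨j % k, Finset.mem_range.mpr (Nat.mod_lt _ hk), (per_mod hp j).symm⟩

lemma cycEdges_subset_verts {k : ℕ} {f : ℕ → TorV m n} (hk : 0 < k)
    (hp : ∀ i, f (i + k) = f i) {e : Sym2 (TorV m n)} (he : e ∈ cycEdges k f)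
    {v : TorV m n} (hv : v ∈ e) : v ∈ cycVerts k f := by
  obtain ⟨i, _, rfl⟩ := Finset.mem_image.mp he
  rcases Sym2.mem_iff.mp hv with rfl | rfl
  · exact vert_mem_cycVerts hk hp i
  · exact vert_mem_cycVerts hk hp (i + 1)

/-- at most one matching edge per vertex, as a convenient predicate -/
def UEdge (N : Finset (Sym2 (TorV m n))) : Prop :=
  ∀ v a b : TorV m n, s(a, v) ∈ N → s(b, v) ∈ N → a = b

lemma uedge_of_pm (hm1 : 1 < m) (hn1 : 1 < n) {N : Finset (Sym2 (TorV m n))}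
    (hN : IsPM m n N) : UEdge N := by
  intro v a b ha hb
  obtain ⟨e, _, hu⟩ := hN.2 v
  have h1 : s(a, v) = e := hu _ ⟨ha, Sym2.mem_mk_right a v⟩
  have h2 : s(b, v) = e := hu _ ⟨hb, Sym2.mem_mk_right b v⟩
  have h : s(a, v) = s(b, v) := h1.trans h2.symm
  rcases Sym2.eq_iff.mp h with ⟨h, -⟩ | ⟨h, h'⟩
  · exact h
  · exact absurd h (torAdj_ne hm1 hn1 (hN.1 _ ha a v rfl))
    
lemma collin_swap {u v w : TorV m n} (h : Collin u v w) : Collin w v u := by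
  unfold Collin at *; tauto

lemma collin_step (hm1 : 1 < m) (hn1 : 1 < n) {u v w w' : TorV m n}
    (huv : torAdj m n u v) (hw : torAdj m n v w) (hw' : torAdj m n v w')
    (cu : Collin u v w) (cu' : Collin u v w')
    (hwu : w ≠ u) (hw'u : w' ≠ u) : w = w' := by
  have hone_m : (1 : ZMod m) ≠ 0 := zmod_one_ne_zero hm1
  have hone_n : (1 : ZMod n) ≠ 0 := zmod_one_ne_zero hn1
  have key2 : ∀ x : TorV m n, torAdj m n v x → v.1 = x.1 →
      (x.2 = v.2 + 1 ∨ x.2 = v.2 - 1) := by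
    intro x hx h1
    rcases hx with ⟨-, h | h⟩ | ⟨h2, h | h⟩
    · right; exact eq_sub_of_add_eq h.symm
    · left; exact h
    · exact absurd (by rwa [← h1, left_eq_add] at h) hone_m
    · exact absurd (by rw [h1] at h; rwa [left_eq_add] at h) hone_m
  have key1 : ∀ x : TorV m n, torAdj m n v x → v.2 = x.2 →
      (x.1 = v.1 + 1 ∨ x.1 = v.1 - 1) := by
    intro x hx h2
    rcases hx with ⟨h1, h | h⟩ | ⟨-, h | h⟩
    · exact absurd (by rwa [← h2, left_eq_add] at h) hone_n
    · exact absurd (by rw [h2] at h; rwa [left_eq_add] at h) hone_n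
    · right; exact eq_sub_of_add_eq h.symm
    · left; exact h
  rcases cu with ⟨cu1, cu2⟩ | ⟨cu1, cu2⟩ <;> rcases cu' with ⟨cu1', cu2'⟩ | ⟨cu1', cu2'⟩
  · -- row, row
    have hu2 : u.2 = v.2 + 1 ∨ u.2 = v.2 - 1 := key2 u (torAdj_symm huv) cu1.symm
    have hw2 := key2 w hw cu2
    have hw'2 := key2 w' hw' cu2'
    have hww : w.1 = w'.1 := cu2.symm.trans cu2'
    have huw : u.1 = w.1 := cu1.trans cu2
    have huw' : u.1 = w'.1 := cu1.trans cu2'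
    rcases hw2 with g | g <;> rcases hw'2 with g' | g'
    · exact Prod.ext hww (g.trans g'.symm)
    · rcases hu2 with h | h
      · exact absurd (Prod.ext huw (h.trans g.symm)).symm hwu
      · exact absurd (Prod.ext huw' (h.trans g'.symm)).symm hw'u
    · rcases hu2 with h | h
      · exact absurd (Prod.ext huw' (h.trans g'.symm)).symm hw'u
      · exact absurd (Prod.ext huw (h.trans g.symm)).symm hwu
    · exact Prod.ext hww (g.trans g'.symm)
  · -- row, col : u = v
    exact absurd (Prod.ext cu1 cu1') (torAdj_ne hm1 hn1 huv)
  · exact absurd (Prod.ext cu1' cu1) (torAdj_ne hm1 hn1 huv)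
  · -- col, col
    have hu1 : u.1 = v.1 + 1 ∨ u.1 = v.1 - 1 := key1 u (torAdj_symm huv) cu1.symm
    have hw1 := key1 w hw cu2
    have hw'1 := key1 w' hw' cu2'
    have hww : w.2 = w'.2 := cu2.symm.trans cu2'
    have huw : u.2 = w.2 := cu1.trans cu2
    have huw' : u.2 = w'.2 := cu1.trans cu2'
    rcases hw1 with g | g <;> rcases hw'1 with g' | g'
    · exact Prod.ext (g.trans g'.symm) hww
    · rcases hu1 with h | h
      · exact absurd (Prod.ext (h.trans g.symm) huw).symm hwu
      · exact absurd (Prod.ext (h.trans g'.symm) huw').symm hw'u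
    · rcases hu1 with h | h
      · exact absurd (Prod.ext (h.trans g'.symm) huw').symm hw'u
      · exact absurd (Prod.ext (h.trans g.symm) huw).symm hwu
    · exact Prod.ext (g.trans g'.symm) hww

lemma outUnique (hm1 : 1 < m) (hn1 : 1 < n) {N : Finset (Sym2 (TorV m n))}
    (hadj : ∀ e ∈ N, ∀ a b : TorV m n, e = s(a, b) → torAdj m n a b)
    (hu : UEdge N) {v w w' : TorV m n}
    (h1 : dArc m n N v w) (h2 : dArc m n N v w') : w = w' := by
  rcases h1 with ⟨hb, haw, hmw⟩ | ⟨hb, haw, hmw, u, humem, hcol⟩ <;>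
    rcases h2 with ⟨hb', haw', hmw'⟩ | ⟨hb', haw', hmw', u', humem', hcol'⟩
  · exact hu v w w' (Sym2.eq_swap ▸ hmw) (Sym2.eq_swap ▸ hmw')
  · exact absurd hb hb'
  · exact absurd hb' hb
  · have huu : u = u' := hu v u u' humem humem'
    subst huu
    have hau : torAdj m n u v := hadj _ humem u v rfl
    have hwu : w ≠ u := by
      rintro rfl
      exact hmw (Sym2.eq_swap ▸ humem)
    have hw'u : w' ≠ u := by
      rintro rfl
      exact hmw' (Sym2.eq_swap ▸ humem')
    exact collin_step hm1 hn1 hau haw haw' hcol hcol' hwu hw'u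

end PhiAux
namespace PhiAux
variable {m n : ℕ}

lemma darc_adj {N : Finset (Sym2 (TorV m n))} {v w : TorV m n}
    (h : dArc m n N v w) : torAdj m n v w := by
  rcases h with ⟨_, h, _⟩ | ⟨_, h, _⟩; exact h; exact h

section Cyc

variable [NeZero m] [NeZero n] {M : Finset (Sym2 (TorV m n))} {k : ℕ} {f : ℕ → TorV m n}

lemma cyc_k_one_lt (hm : Even m) (hn : Even n) (hc : IsDiCycle m n M k f) : 1 < k := by
  obtain ⟨hk, hinj, hp, ha⟩ := hc
  by_contra h
  have hk1 : k = 1 := by omega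
  have h1 : f 1 = f 0 := by rw [← hk1]; simpa using hp 0
  have h0 : torAdj m n (f 0) (f 1) := darc_adj (ha 0)
  rw [h1] at h0
  exact torAdj_irrefl (one_lt_of_even_nezero hm) (one_lt_of_even_nezero hn) h0

omit [NeZero m] [NeZero n] in
lemma cyc_edge_iff (hc : IsDiCycle m n M k f) (j : ℕ) :
    (s(f j, f (j + 1)) ∈ M ↔ IsBlack (f j)) := by
  obtain ⟨hk, hinj, hp, ha⟩ := hc
  constructor
  · intro h
    rcases ha j with ⟨c, _, _⟩ | ⟨_, _, c, _⟩
    · exact c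
    · exact absurd h c
  · intro h
    rcases ha j with ⟨_, _, c⟩ | ⟨c, _, _⟩
    · exact c
    · exact absurd h c

lemma rev_arc (hm : Even m) (hn : Even n) (hM : IsPM m n M)
    (hc : IsDiCycle m n M k f) (j : ℕ) :
    dArc m n (M ∆ cycEdges k f) (f (j + 1)) (f j) := by
  have hm1 := one_lt_of_even_nezero hm
  have hn1 := one_lt_of_even_nezero hn
  have hk := cyc_k_one_lt hm hn hc
  obtain ⟨hk0, hinj, hp, ha⟩ := hc
  have hadjj : torAdj m n (f j) (f (j + 1)) := darc_adj (ha j)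
  have hedge : s(f j, f (j + 1)) ∈ cycEdges k f := edge_mem_cycEdges hk hp j
  by_cases hb : IsBlack (f (j + 1))
  · have hnm : s(f j, f (j + 1)) ∉ M := by
      intro h
      exact (blackFlip hm hn hadjj).mp ((cyc_edge_iff ⟨hk0, hinj, hp, ha⟩ j).mp h) hb
    have mem' : s(f (j + 1), f j) ∈ M ∆ cycEdges k f := by
      rw [Sym2.eq_swap]
      exact Finset.mem_symmDiff.mpr (Or.inr ⟨hedge, hnm⟩)
    exact Or.inl ⟨hb, torAdj_symm hadjj, mem'⟩
  · have hbj : IsBlack (f j) := (blackFlip hm hn hadjj).mpr hb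
    have hmem : s(f j, f (j + 1)) ∈ M := (cyc_edge_iff ⟨hk0, hinj, hp, ha⟩ j).mpr hbj
    have hnot' : s(f (j + 1), f j) ∉ M ∆ cycEdges k f := by
      rw [Sym2.eq_swap]
      intro hmem'
      rcases Finset.mem_symmDiff.mp hmem' with ⟨_, h2⟩ | ⟨_, h2⟩
      · exact h2 hedge
      · exact h2 hmem
    rcases ha (j + 1) with ⟨c, _, _⟩ | ⟨_, hadj2, hnm2, u, hum, hcol⟩
    · exact absurd c hb
    · have huj : u = f j :=
        uedge_of_pm hm1 hn1 hM (f (j + 1)) u (f j) hum hmem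
      rw [huj] at hcol
      have hcol' : Collin (f (j + 1 + 1)) (f (j + 1)) (f j) := collin_swap hcol
      have hmem2 : s(f (j + 1 + 1), f (j + 1)) ∈ M ∆ cycEdges k f := by
        rw [Sym2.eq_swap]
        exact Finset.mem_symmDiff.mpr (Or.inr ⟨edge_mem_cycEdges hk hp (j + 1), hnm2⟩)
      exact Or.inr ⟨hb, torAdj_symm hadjj, hnot', f (j + 1 + 1), hmem2, hcol'⟩

end Cyc
end PhiAux
namespace PhiAux
variable {m n : ℕ}

section Cyc2
variable [NeZero m] [NeZero n] {M : Finset (Sym2 (TorV m n))} {k : ℕ} {f : ℕ → TorV m n}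

omit [NeZero m] [NeZero n] in
lemma adj_symmDiff (hM : IsPM m n M) (hc : IsDiCycle m n M k f) :
    ∀ e ∈ M ∆ cycEdges k f, ∀ a b : TorV m n, e = s(a, b) → torAdj m n a b := by
  rintro e he a b rfl
  rcases Finset.mem_symmDiff.mp he with ⟨h1, -⟩ | ⟨h1, -⟩
  · exact hM.1 _ h1 a b rfl
  · obtain ⟨i, -, hei⟩ := Finset.mem_image.mp h1
    have hadj := darc_adj (hc.2.2.2 i)
    rcases Sym2.eq_iff.mp hei with ⟨ha, hb⟩ | ⟨ha, hb⟩
    · rw [← ha, ← hb]; exact hadj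
    · rw [← ha, ← hb]; exact torAdj_symm hadj

lemma uedge_symmDiff (hm : Even m) (hn : Even n) (hM : IsPM m n M)
    (hc : IsDiCycle m n M k f) : UEdge (M ∆ cycEdges k f) := by
  have hm1 := one_lt_of_even_nezero hm
  have hn1 := one_lt_of_even_nezero hn
  have hk := cyc_k_one_lt hm hn hc
  obtain ⟨hk0, hinj, hp, ha⟩ := hc
  have hc' : IsDiCycle m n M k f := ⟨hk0, hinj, hp, ha⟩
  have huM : UEdge M := uedge_of_pm hm1 hn1 hM
  intro v a b hva hvb
  by_cases hv : v ∈ cycVerts k f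
  · obtain ⟨i, hik, hfi⟩ := Finset.mem_image.mp hv
    subst hfi
    have hik' := Finset.mem_range.mp hik
    have hj1 : (i + k - 1) + 1 = i + k := by omega
    have hfj1 : f ((i + k - 1) + 1) = f i := by rw [hj1]; exact hp i
    have claim1 : ∀ c : TorV m n, s(c, f i) ∈ M ∆ cycEdges k f →
        c = f (i + k - 1) ∨ c = f (i + 1) := by
      intro c hcm
      rcases Finset.mem_symmDiff.mp hcm with ⟨hcM, -⟩ | ⟨hcE, -⟩
      · by_cases hbv : IsBlack (f i)
        · right
          have h1 : s(f i, f (i + 1)) ∈ M := (cyc_edge_iff hc' i).mpr hbv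
          have h2 : s(f (i + 1), f i) ∈ M := by rw [Sym2.eq_swap]; exact h1
          exact huM (f i) c (f (i + 1)) hcM h2
        · left
          have hadjj : torAdj m n (f (i + k - 1)) (f ((i + k - 1) + 1)) :=
            darc_adj (ha (i + k - 1))
          rw [hfj1] at hadjj
          have hbj : IsBlack (f (i + k - 1)) := (blackFlip hm hn hadjj).mpr hbv
          have h1 : s(f (i + k - 1), f i) ∈ M := by
            have := (cyc_edge_iff hc' (i + k - 1)).mpr hbj
            rwa [hfj1] at this
          exact huM (f i) c (f (i + k - 1)) hcM h1
      · obtain ⟨t, htk, hte⟩ := Finset.mem_image.mp hcE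
        have htk' := Finset.mem_range.mp htk
        rcases Sym2.eq_iff.mp hte with ⟨h1, h2⟩ | ⟨h1, h2⟩
        · left
          have hi : (t + 1) % k = i := by
            refine hinj _ (Nat.mod_lt _ (by omega)) i hik' ?_
            rw [← per_mod hp]; exact h2
          have hft : f t = f (i + k - 1) := by
            refine fPer hp ?_
            rcases Nat.lt_or_ge (t + 1) k with hlt | hge
            · rw [Nat.mod_eq_of_lt hlt] at hi
              rw [show i + k - 1 = t + k by omega, Nat.add_mod_right]
            · have htk1 : t + 1 = k := by omega
              rw [htk1, Nat.mod_self] at hi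
              rw [show i + k - 1 = t by omega]
          rw [← h1, hft]
        · right
          have : t = i := hinj t htk' i hik' h1
          rw [← h2, this]
      -- end claim1
    have hone : (s(f (i + k - 1), f i) ∉ M ∆ cycEdges k f) ∨
        (s(f (i + 1), f i) ∉ M ∆ cycEdges k f) := by
      by_cases hbv : IsBlack (f i)
      · right
        have h1 : s(f i, f (i + 1)) ∈ M := (cyc_edge_iff hc' i).mpr hbv
        have h2 : s(f i, f (i + 1)) ∈ cycEdges k f := edge_mem_cycEdges hk hp i
        rw [Sym2.eq_swap]
        intro hmem'
        rcases Finset.mem_symmDiff.mp hmem' with ⟨-, h⟩ | ⟨-, h⟩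
        · exact h h2
        · exact h h1
      · left
        have hadjj : torAdj m n (f (i + k - 1)) (f ((i + k - 1) + 1)) :=
          darc_adj (ha (i + k - 1))
        rw [hfj1] at hadjj
        have hbj : IsBlack (f (i + k - 1)) := (blackFlip hm hn hadjj).mpr hbv
        have h1 : s(f (i + k - 1), f i) ∈ M := by
          have := (cyc_edge_iff hc' (i + k - 1)).mpr hbj
          rwa [hfj1] at this
        have h2 : s(f (i + k - 1), f i) ∈ cycEdges k f := by
          have := edge_mem_cycEdges hk hp (i + k - 1)
          rwa [hfj1] at this
        intro hmem'
        rcases Finset.mem_symmDiff.mp hmem' with ⟨-, h⟩ | ⟨-, h⟩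
        · exact h h2
        · exact h h1
    rcases claim1 a hva with ha' | ha' <;> rcases claim1 b hvb with hb' | hb' <;>
      subst ha' <;> subst hb'
    · rfl
    · rcases hone with h | h
      · exact absurd hva h
      · exact absurd hvb h
    · rcases hone with h | h
      · exact absurd hvb h
      · exact absurd hva h
    · rfl
  · have key : ∀ c : TorV m n, s(c, v) ∈ M ∆ cycEdges k f → s(c, v) ∈ M := by
      intro c hcm
      rcases Finset.mem_symmDiff.mp hcm with ⟨h, -⟩ | ⟨h, -⟩
      · exact h
      · exact absurd (cycEdges_subset_verts hk0 hp h (Sym2.mem_mk_right c v)) hv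
    exact huM v a b (key a hva) (key b hvb)

omit [NeZero m] [NeZero n] in
lemma arc_outside (hk0 : 0 < k) (hp : ∀ i, f (i + k) = f i)
    {v w : TorV m n} (hv : v ∉ cycVerts k f)
    (h : dArc m n (M ∆ cycEdges k f) v w) : dArc m n M v w := by
  have key : ∀ e : Sym2 (TorV m n), v ∈ e → (e ∈ M ∆ cycEdges k f ↔ e ∈ M) := by
    intro e hve
    have hne : e ∉ cycEdges k f := fun h' => hv (cycEdges_subset_verts hk0 hp h' hve)
    rw [Finset.mem_symmDiff]
    constructor
    · rintro (⟨h1, -⟩ | ⟨h1, -⟩)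
      · exact h1
      · exact absurd h1 hne
    · exact fun h1 => Or.inl ⟨h1, hne⟩
  rcases h with ⟨hb, hadj, hmem⟩ | ⟨hb, hadj, hmem, u, hum, hcol⟩
  · exact Or.inl ⟨hb, hadj, (key _ (Sym2.mem_mk_left v w)).mp hmem⟩
  · exact Or.inr ⟨hb, hadj, fun h1 => hmem ((key _ (Sym2.mem_mk_left v w)).mpr h1),
      u, (key _ (Sym2.mem_mk_right u v)).mp hum, hcol⟩

end Cyc2

section Determ
variable [NeZero m] [NeZero n]

omit [NeZero m] [NeZero n] in
lemma edges_subset_of_shift {k1 k2 : ℕ} {f1 f2 : ℕ → TorV m n} (hk1 : 0 < k1) (hk2 : 1 < k2)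
    (hp1 : ∀ i, f1 (i + k1) = f1 i) (hp2 : ∀ i, f2 (i + k2) = f2 i)
    {a b : ℕ} (key : ∀ t, f1 (a + t) = f2 (b + t)) :
    cycEdges k1 f1 ⊆ cycEdges k2 f2 := by
  intro e he
  obtain ⟨i, hik, rfl⟩ := Finset.mem_image.mp he
  set t := i + k1 * a - a with ht
  have hle : a ≤ k1 * a := Nat.le_mul_of_pos_left a hk1
  have hat : a + t = i + k1 * a := by omega
  have h1 : f1 (a + t) = f1 i := by rw [hat]; exact per_mul hp1 a i
  have h1' : f1 (a + t + 1) = f1 (i + 1) := by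
    rw [hat, show i + k1 * a + 1 = (i + 1) + k1 * a by ring]
    exact per_mul hp1 a (i + 1)
  have key1 : f1 (a + t + 1) = f2 (b + t + 1) := key (t + 1)
  have heq : s(f1 i, f1 (i + 1)) = s(f2 (b + t), f2 (b + t + 1)) := by
    rw [← h1, ← h1', key t, key1]
  rw [heq]
  exact edge_mem_cycEdges hk2 hp2 (b + t)

lemma cyc_determ (hm : Even m) (hn : Even n) {N : Finset (Sym2 (TorV m n))}
    (hadj : ∀ e ∈ N, ∀ a b : TorV m n, e = s(a, b) → torAdj m n a b)
    (hu : UEdge N) {k1 k2 : ℕ} {f1 f2 : ℕ → TorV m n}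
    (c1 : IsDiCycle m n N k1 f1) (c2 : IsDiCycle m n N k2 f2)
    {a b : ℕ} (hab : f1 a = f2 b) : cycEdges k1 f1 = cycEdges k2 f2 := by
  have hm1 := one_lt_of_even_nezero hm
  have hn1 := one_lt_of_even_nezero hn
  have hK1 := cyc_k_one_lt hm hn c1
  have hK2 := cyc_k_one_lt hm hn c2
  obtain ⟨hk1, hinj1, hp1, ha1⟩ := c1
  obtain ⟨hk2, hinj2, hp2, ha2⟩ := c2
  have key : ∀ t, f1 (a + t) = f2 (b + t) := by
    intro t
    induction t with
    | zero => simpa using hab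
    | succ t ih =>
      have h1 := ha1 (a + t)
      have h2 := ha2 (b + t)
      rw [ih] at h1
      exact outUnique hm1 hn1 hadj hu h1 h2
  exact Finset.Subset.antisymm
    (edges_subset_of_shift hk1 hK2 hp1 hp2 key)
    (edges_subset_of_shift hk2 hK1 hp2 hp1 (fun t => (key t).symm))

end Determ
end PhiAux
namespace PhiAux
variable {m n : ℕ}

section Rev
variable [NeZero m] [NeZero n] {M : Finset (Sym2 (TorV m n))} {k : ℕ} {f : ℕ → TorV m n}

lemma rev_cycle (hm : Even m) (hn : Even n) (hM : IsPM m n M)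
    (hc : IsDiCycle m n M k f) {g : ℕ → TorV m n} (hg : ∀ i, g i = f (k - i % k)) :
    IsDiCycle m n (M ∆ cycEdges k f) k g ∧ cycVerts k g = cycVerts k f ∧
      cycEdges k g = cycEdges k f := by
  have hk := cyc_k_one_lt hm hn hc
  obtain ⟨hk0, hinj, hp, ha⟩ := hc
  have hc' : IsDiCycle m n M k f := ⟨hk0, hinj, hp, ha⟩
  have hfk : f k = f 0 := by simpa using hp 0
  have per_g : ∀ i, g (i + k) = g i := by
    intro i; rw [hg, hg, Nat.add_mod_right]
  have e1 : ∀ i, g i = f (k - i % k - 1 + 1) := by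
    intro i
    have hr : i % k < k := Nat.mod_lt _ (by omega)
    rw [hg]; exact congrArg f (by omega)
  have e2 : ∀ i, g (i + 1) = f (k - i % k - 1) := by
    intro i
    have hr : i % k < k := Nat.mod_lt _ (by omega)
    have hs : (i + 1) % k = (i % k + 1) % k := succ_mod hk
    rcases Nat.lt_or_ge (i % k + 1) k with hlt | hge
    · rw [hg, hs, Nat.mod_eq_of_lt hlt]; exact congrArg f (by omega)
    · have heq : i % k + 1 = k := by omega
      rw [hg, hs, heq, Nat.mod_self, Nat.sub_zero, hfk,
        show k - i % k - 1 = 0 by omega]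
  have ginj : ∀ i < k, ∀ j < k, g i = g j → i = j := by
    intro i hi j hj hij
    rw [hg, hg, Nat.mod_eq_of_lt hi, Nat.mod_eq_of_lt hj,
      per_mod hp (k - i), per_mod hp (k - j)] at hij
    have hidx := hinj _ (Nat.mod_lt _ (by omega)) _ (Nat.mod_lt _ (by omega)) hij
    rcases Nat.eq_zero_or_pos i with rfl | hi0 <;> rcases Nat.eq_zero_or_pos j with rfl | hj0
    · rfl
    · rw [Nat.sub_zero, Nat.mod_self, Nat.mod_eq_of_lt (by omega)] at hidx; omega
    · rw [Nat.sub_zero, Nat.mod_self, Nat.mod_eq_of_lt (by omega)] at hidx; omega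
    · rw [Nat.mod_eq_of_lt (by omega), Nat.mod_eq_of_lt (by omega)] at hidx; omega
  refine ⟨⟨by omega, ginj, per_g, ?_⟩, ?_, ?_⟩
  · intro i
    rw [e1 i, e2 i]
    exact rev_arc hm hn hM hc' _
  · -- verts
    ext v
    simp only [cycVerts, Finset.mem_image, Finset.mem_range]
    constructor
    · rintro ⟨i, hi, rfl⟩
      exact ⟨(k - i % k) % k, Nat.mod_lt _ (by omega), by rw [hg, per_mod hp (k - i % k)]⟩
    · rintro ⟨t, ht, rfl⟩
      rcases Nat.eq_zero_or_pos t with rfl | ht0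
      · refine ⟨0, by omega, ?_⟩
        rw [hg, Nat.zero_mod, Nat.sub_zero, hfk]
      · refine ⟨k - t, by omega, ?_⟩
        rw [hg, Nat.mod_eq_of_lt (by omega), show k - (k - t) = t by omega]
  · -- edges
    refine Finset.Subset.antisymm ?_ ?_
    · intro e he
      obtain ⟨i, hik, rfl⟩ := Finset.mem_image.mp he
      rw [e1 i, e2 i, Sym2.eq_swap]
      exact edge_mem_cycEdges hk hp _
    · intro e he
      obtain ⟨t, htk, rfl⟩ := Finset.mem_image.mp he
      have htk' := Finset.mem_range.mp htk
      refine Finset.mem_image.mpr ⟨k - t - 1, Finset.mem_range.mpr (by omega), ?_⟩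
      have g1 : g (k - t - 1) = f (t + 1) := by
        rw [hg, Nat.mod_eq_of_lt (by omega), show k - (k - t - 1) = t + 1 by omega]
      have g2 : g (k - t - 1 + 1) = f t := by
        rw [e2 (k - t - 1), Nat.mod_eq_of_lt (by omega),
          show k - (k - t - 1) - 1 = t by omega]
      rw [g1, g2, Sym2.eq_swap]

end Rev
end PhiAux
open PhiAux in
/-- fix any total order on vertex sets (an orientation-independent
order on cycles).  Let `Φ(M) = M ∆ U(C_M)` where `C_M` is the first directed
cycle of `D_{m,n}(M)` in this order.  Then `Φ` is an involution on perfect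
matchings: if `C` is the minimal cycle of `D_{m,n}(M)` and `C'` the minimal cycle
of `D_{m,n}(M ∆ U(C))`, then `(M ∆ U(C)) ∆ U(C') = M`. -/
theorem phi_involution (m n : ℕ) [NeZero m] [NeZero n]
    (hm : Even m) (hn : Even n)
    (r : LinearOrder (Finset (TorV m n)))
    (M : Finset (Sym2 (TorV m n))) (hM : IsPM m n M)
    (k : ℕ) (f : ℕ → TorV m n) (hc : IsDiCycle m n M k f)
    (hmin : ∀ S ∈ cycleVertSets m n M, r.le (cycVerts k f) S)
    (k' : ℕ) (f' : ℕ → TorV m n)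
    (hc' : IsDiCycle m n (M ∆ cycEdges k f) k' f')
    (hmin' : ∀ S ∈ cycleVertSets m n (M ∆ cycEdges k f), r.le (cycVerts k' f') S) :
    (M ∆ cycEdges k f) ∆ cycEdges k' f' = M := by

  obtain ⟨hgrev, hgverts, hgedges⟩ :=
    rev_cycle hm hn hM hc (g := fun i => f (k - i % k)) (fun i => rfl)
  have hadj' := adj_symmDiff hM hc
  have hu' := uedge_symmDiff hm hn hM hc
  suffices hEE : cycEdges k' f' = cycEdges k f by
    rw [hEE, symmDiff_assoc, symmDiff_self, symmDiff_bot]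
  by_cases hshare : ∃ v, v ∈ cycVerts k' f' ∧ v ∈ cycVerts k f
  · obtain ⟨v, hv1, hv2⟩ := hshare
    rw [← hgverts] at hv2
    obtain ⟨a, ha', hfa⟩ := Finset.mem_image.mp hv1
    obtain ⟨b, hb', hgb⟩ := Finset.mem_image.mp hv2
    have hdet := cyc_determ hm hn hadj' hu' hc' hgrev (hfa.trans hgb.symm)
    rw [hdet, hgedges]
  · push_neg at hshare
    have hcM : IsDiCycle m n M k' f' := by
      obtain ⟨hk'0, hinj', hp', ha''⟩ := hc'
      exact ⟨hk'0, hinj', hp', fun i =>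
        arc_outside hc.1 hc.2.2.1 (hshare _ (vert_mem_cycVerts hk'0 hp' i)) (ha'' i)⟩
    have h1 : r.le (cycVerts k f) (cycVerts k' f') := hmin _ ⟨k', f', hcM, rfl⟩
    have h2 : r.le (cycVerts k' f') (cycVerts k f) :=
      hmin' _ ⟨k, (fun i => f (k - i % k)), hgrev, hgverts⟩
    have heq : cycVerts k' f' = cycVerts k f := r.le_antisymm _ _ h2 h1
    have hmem0 : f' 0 ∈ cycVerts k' f' := vert_mem_cycVerts hc'.1 hc'.2.2.1 0
    exact absurd (heq ▸ hmem0) (hshare _ hmem0)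
end
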